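/- Root-of-unity summation generalizing Entry 1.6.6: Let h ≥ 1 be an integer, let ω be a primitive h-th root of unity in ℂ, let q, t be complex numbers with |q| < 1 and |q^t| < 1 (principal complex power), and let a be a complex number with |aq| < 1 such that 1 − a^h·(q^h)·(q^t)^{hj} ≠ 0 for every nonnegative integer j and (a q ω^r ; q^t)_∞ ≠ 0 for r = 0, 1, …, h−1. Then ∑_{j=0}^∞ (−1)^j (q^t)^{j(j+1)/2} / [(q^t;q^t)_j · (1 − a^h q^{h(tj+1)})] = (1/h) · ∑_{r=0}^{h−1} (q^t;q^t)_∞ / (a q ω^r ; q^t)_∞, where q^{h(tj+1)} := q^h·(q^t)^{hj}. -/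

import Mathlib

open Complex

/-- Finite q-Pochhammer symbol `(A;Q)_k = ∏_{r=0}^{k-1} (1 - A Q^r)`. -/
noncomputable def qp (A Q : ℂ) (k : ℕ) : ℂ := ∏ r ∈ Finset.range k, (1 - A * Q ^ r)

/-- Infinite q-Pochhammer symbol `(A;Q)_∞ = ∏_{r=0}^{∞} (1 - A Q^r)`. -/
noncomputable def qpInf (A Q : ℂ) : ℂ := ∏' r : ℕ, (1 - A * Q ^ r)

/-- q-Pochhammer symbol with (possibly non-integer) index:
`(A;Q)_{c k} := (A;Q)_∞ / (A R^k;Q)_∞` where `R = Q^c`. -/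
noncomputable def qpc (A Q R : ℂ) (k : ℕ) : ℂ := qpInf A Q / qpInf (A * R ^ k) Q

/-- q-Pochhammer symbol with shifted (possibly non-integer) index:
`(A;Q)_{c k + 1} := (A;Q)_∞ / (A Q R^k;Q)_∞` where `R = Q^c`. -/
noncomputable def qpc1 (A Q R : ℂ) (k : ℕ) : ℂ := qpInf A Q / qpInf (A * Q * R ^ k) Q

/-!
Write `Q = q^t` and `A = a q`. Expanding `1/(1 - A^h Q^{hj})` as a geometric series and
swapping the two sums, the sum over `j` becomes Euler's series
`E_Q(z) = ∑ (-1)^j Q^{j(j-1)/2} z^j / (Q;Q)_j = (z;Q)_∞` at `z = Q^{hm+1}`, so the left side is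
`(Q;Q)_∞ ∑_m A^{hm} / (Q;Q)_{hm}`. On the right, Euler's other series
`e_Q(z) = ∑ z^n / (Q;Q)_n = 1/(z;Q)_∞` turns each quotient into
`(Q;Q)_∞ ∑_n (A ω^r)^n / (Q;Q)_n`, and averaging over `r` keeps exactly the terms with `h ∣ n`.
Both Euler identities follow from the functional equations `e_Q(zQ) = (1 - z) e_Q(z)` and
`E_Q(z) = (1 - z) E_Q(zQ)`, iterated `N` times, as `N → ∞`.
-/

open Filter Topology

section Algebraic

variable {A Q : ℂ}

lemma qp_zero (A Q : ℂ) : qp A Q 0 = 1 := Finset.prod_range_zero _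

lemma qp_succ (A Q : ℂ) (n : ℕ) : qp A Q (n + 1) = qp A Q n * (1 - A * Q ^ n) :=
  Finset.prod_range_succ _ n

lemma apply_eq_qp_mul_apply_zero {u : ℕ → ℂ} (hu : ∀ N, u (N + 1) = (1 - A * Q ^ N) * u N)
    (N : ℕ) : u N = qp A Q N * u 0 := by
  induction N with
  | zero => rw [qp_zero, one_mul]
  | succ N ih => rw [hu, ih, qp_succ]; ring

lemma apply_zero_eq_qp_mul_apply {u : ℕ → ℂ} (hu : ∀ N, u N = (1 - A * Q ^ N) * u (N + 1))
    (N : ℕ) : u 0 = qp A Q N * u N := by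
  induction N with
  | zero => rw [qp_zero, one_mul]
  | succ N ih => rw [ih, hu N, qp_succ]; ring

lemma choose_two_succ (n : ℕ) : (n + 1).choose 2 = n.choose 2 + n := by
  rw [Nat.choose_succ_succ, Nat.choose_one_right, add_comm]

lemma mul_succ_div_two (n : ℕ) : n * (n + 1) / 2 = n.choose 2 + n := by
  rw [← choose_two_succ, Nat.choose_two_right, Nat.add_sub_cancel, mul_comm]

end Algebraic

section Analytic

variable {A Q z : ℂ}

lemma norm_mul_pow_le (hQ : ‖Q‖ ≤ 1) (A : ℂ) (n : ℕ) : ‖A * Q ^ n‖ ≤ ‖A‖ := by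
  rw [norm_mul, norm_pow]
  exact mul_le_of_le_one_right (norm_nonneg A) (pow_le_one₀ (norm_nonneg Q) hQ)

lemma norm_mul_pow_lt_one (hQ : ‖Q‖ ≤ 1) (hA : ‖A‖ < 1) (n : ℕ) : ‖A * Q ^ n‖ < 1 :=
  (norm_mul_pow_le hQ A n).trans_lt hA

lemma one_sub_mul_pow_ne_zero (hQ : ‖Q‖ ≤ 1) (hA : ‖A‖ < 1) (n : ℕ) : 1 - A * Q ^ n ≠ 0 := by
  intro h
  have := norm_mul_pow_lt_one hQ hA n
  rw [← sub_eq_zero.mp h, norm_one] at this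
  exact lt_irrefl _ this

lemma qp_ne_zero (hQ : ‖Q‖ ≤ 1) (hA : ‖A‖ < 1) (k : ℕ) : qp A Q k ≠ 0 :=
  Finset.prod_ne_zero_iff.mpr fun n _ => one_sub_mul_pow_ne_zero hQ hA n

lemma summable_norm_mul_pow (hQ : ‖Q‖ < 1) (A : ℂ) : Summable fun n : ℕ => ‖A * Q ^ n‖ := by
  simpa [norm_mul, norm_pow] using
    (summable_geometric_of_lt_one (norm_nonneg Q) hQ).mul_left ‖A‖

lemma multipliable_one_sub_mul_pow (hQ : ‖Q‖ < 1) (A : ℂ) :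
    Multipliable fun n : ℕ => 1 - A * Q ^ n := by
  simpa [sub_eq_add_neg] using
    multipliable_one_add_of_summable (f := fun n => -(A * Q ^ n))
      (by simpa using summable_norm_mul_pow hQ A)

lemma tendsto_qp_qpInf (hQ : ‖Q‖ < 1) (A : ℂ) :
    Tendsto (qp A Q) atTop (𝓝 (qpInf A Q)) :=
  (multipliable_one_sub_mul_pow hQ A).hasProd.tendsto_prod_nat

lemma qp_mul_qpInf (hQ : ‖Q‖ < 1) (A : ℂ) (k : ℕ) :
    qp A Q k * qpInf (A * Q ^ k) Q = qpInf A Q := by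
  have hshift : ∀ n, 1 - A * Q ^ k * Q ^ n = 1 - A * Q ^ (n + k) := fun n => by ring
  have h : Multipliable fun n => 1 - A * Q ^ (n + k) := by
    simpa only [hshift] using multipliable_one_sub_mul_pow hQ (A * Q ^ k)
  unfold qp qpInf
  simp only [hshift]
  exact Multipliable.prod_mul_tprod_nat_mul' (f := fun n => 1 - A * Q ^ n) h

lemma qpInf_ne_zero (hQ : ‖Q‖ < 1) (hA : ‖A‖ < 1) : qpInf A Q ≠ 0 := by
  simpa [qpInf, sub_eq_add_neg] using
    tprod_one_add_ne_zero_of_summable (f := fun n => -(A * Q ^ n))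
      (by simpa [← sub_eq_add_neg] using one_sub_mul_pow_ne_zero hQ.le hA)
      (by simpa using summable_norm_mul_pow hQ A)

lemma exists_norm_inv_qp_le (hQ : ‖Q‖ < 1) : ∃ C, ∀ n, ‖(qp Q Q n)⁻¹‖ ≤ C := by
  obtain ⟨C, hC⟩ :=
    ((tendsto_qp_qpInf hQ Q).inv₀ (qpInf_ne_zero hQ hQ)).norm.bddAbove_range
  exact ⟨C, fun n => hC ⟨n, rfl⟩⟩

end Analytic

section PowerSeries

variable {c d : ℕ → ℂ} {Q z : ℂ}

lemma summable_norm_mul_pow_of_bounded {C : ℝ} (hc : ∀ n, ‖c n‖ ≤ C) (hz : ‖z‖ < 1) :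
    Summable fun n => ‖c n * z ^ n‖ := by
  refine .of_nonneg_of_le (fun n => norm_nonneg _) (fun n => ?_)
    ((summable_geometric_of_lt_one (norm_nonneg z) hz).mul_left C)
  rw [norm_mul, norm_pow]
  exact mul_le_mul_of_nonneg_right (hc n) (by positivity)

lemma tsum_mul_pow_sub_tsum_mul_mul_pow (hcd : ∀ n, c (n + 1) * (1 - Q ^ (n + 1)) = d n)
    (hz : Summable fun n => c n * z ^ n) (hzQ : Summable fun n => c n * (z * Q) ^ n) :
    ∑' n, c n * z ^ n - ∑' n, c n * (z * Q) ^ n = z * ∑' n, d n * z ^ n := by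
  rw [← hz.tsum_sub hzQ, (hz.sub hzQ).tsum_eq_zero_add, ← tsum_mul_left]
  simp only [pow_zero, sub_self, zero_add]
  congr 1 with n
  rw [← hcd]
  ring

lemma tendsto_tsum_mul_mul_pow_pow (hQ : ‖Q‖ < 1) (hc : Summable fun n => ‖c n * z ^ n‖) :
    Tendsto (fun N : ℕ => ∑' n, c n * (z * Q ^ N) ^ n) atTop (𝓝 (c 0)) := by
  have hlim : ∀ n,
      Tendsto (fun N : ℕ => c n * (z * Q ^ N) ^ n) atTop (𝓝 (c n * (z * 0) ^ n)) :=
    fun n => (((tendsto_pow_atTop_nhds_zero_of_norm_lt_one hQ).const_mul z).pow n).const_mul _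
  have hbound : ∀ N n : ℕ, ‖c n * (z * Q ^ N) ^ n‖ ≤ ‖c n * z ^ n‖ := by
    intro N n
    rw [norm_mul, norm_mul, norm_pow, norm_pow]
    gcongr
    exact norm_mul_pow_le hQ.le z N
  have hsum : ∑' n, c n * (z * 0) ^ n = c 0 := by
    rw [tsum_eq_single 0 fun n hn => by simp [hn]]
    simp
  simpa only [hsum] using tendsto_tsum_of_dominated_convergence hc hlim (.of_forall hbound)

end PowerSeries

/-- The q-exponentials `e_Q(z)` and `E_Q(z)` of Gasper–Rahman. -/
noncomputable def smallQExp (Q z : ℂ) : ℂ := ∑' n, (qp Q Q n)⁻¹ * z ^ n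

noncomputable def bigQExp (Q z : ℂ) : ℂ :=
  ∑' n, (-1) ^ n * Q ^ n.choose 2 * (qp Q Q n)⁻¹ * z ^ n

section QExp

variable {Q z : ℂ}

lemma summable_norm_smallQExp (hQ : ‖Q‖ < 1) (hz : ‖z‖ < 1) :
    Summable fun n => ‖(qp Q Q n)⁻¹ * z ^ n‖ :=
  let ⟨_, hC⟩ := exists_norm_inv_qp_le hQ
  summable_norm_mul_pow_of_bounded hC hz

lemma summable_norm_bigQExp (hQ : ‖Q‖ < 1) (hz : ‖z‖ < 1) :
    Summable fun n => ‖(-1) ^ n * Q ^ n.choose 2 * (qp Q Q n)⁻¹ * z ^ n‖ := by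
  obtain ⟨C, hC⟩ := exists_norm_inv_qp_le hQ
  refine summable_norm_mul_pow_of_bounded (C := C) (fun n => ?_) hz
  rw [norm_mul, norm_mul, norm_pow, norm_pow, norm_neg, norm_one, one_pow, one_mul]
  exact (mul_le_of_le_one_left (norm_nonneg _) (pow_le_one₀ (norm_nonneg Q) hQ.le)).trans
    (hC n)

lemma smallQExp_mul (hQ : ‖Q‖ < 1) (hz : ‖z‖ < 1) :
    smallQExp Q (z * Q) = (1 - z) * smallQExp Q z := by
  have hzQ : ‖z * Q‖ < 1 := by simpa using norm_mul_pow_lt_one hQ.le hz 1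
  have hcd : ∀ n, (qp Q Q (n + 1))⁻¹ * (1 - Q ^ (n + 1)) = (qp Q Q n)⁻¹ := fun n => by
    rw [qp_succ, mul_inv, ← pow_succ', mul_assoc,
      inv_mul_cancel₀ (by simpa [← pow_succ'] using one_sub_mul_pow_ne_zero hQ.le hQ n), mul_one]
  have h := tsum_mul_pow_sub_tsum_mul_mul_pow hcd (summable_norm_smallQExp hQ hz).of_norm
    (summable_norm_smallQExp hQ hzQ).of_norm
  unfold smallQExp
  linear_combination -h

lemma bigQExp_eq_one_sub_mul (hQ : ‖Q‖ < 1) (hz : ‖z‖ < 1) :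
    bigQExp Q z = (1 - z) * bigQExp Q (z * Q) := by
  have hzQ : ‖z * Q‖ < 1 := by simpa using norm_mul_pow_lt_one hQ.le hz 1
  have hcd : ∀ n,
      (-1) ^ (n + 1) * Q ^ (n + 1).choose 2 * (qp Q Q (n + 1))⁻¹ * (1 - Q ^ (n + 1))
        = -((-1) ^ n * Q ^ n.choose 2 * (qp Q Q n)⁻¹ * Q ^ n) := fun n => by
    have h1 : 1 - Q * Q ^ n ≠ 0 := one_sub_mul_pow_ne_zero hQ.le hQ n
    have h2 : qp Q Q n ≠ 0 := qp_ne_zero hQ.le hQ n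
    rw [choose_two_succ, qp_succ, pow_succ' Q n]
    field_simp
    ring
  have h := tsum_mul_pow_sub_tsum_mul_mul_pow hcd (summable_norm_bigQExp hQ hz).of_norm
    (summable_norm_bigQExp hQ hzQ).of_norm
  have hneg : ∑' n, -((-1) ^ n * Q ^ n.choose 2 * (qp Q Q n)⁻¹ * Q ^ n) * z ^ n
      = -bigQExp Q (z * Q) := by
    rw [bigQExp, ← tsum_neg]
    congr 1 with n
    ring
  rw [hneg] at h
  unfold bigQExp at h ⊢
  linear_combination h

theorem qpInf_mul_smallQExp (hQ : ‖Q‖ < 1) (hz : ‖z‖ < 1) :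
    qpInf z Q * smallQExp Q z = 1 := by
  have hiter : ∀ N, smallQExp Q (z * Q ^ N) = qp z Q N * smallQExp Q z := by
    simpa using apply_eq_qp_mul_apply_zero (u := fun N => smallQExp Q (z * Q ^ N)) fun N => by
      rw [pow_succ, ← mul_assoc, smallQExp_mul hQ (norm_mul_pow_lt_one hQ.le hz N)]
  have hlim : Tendsto (fun N => smallQExp Q (z * Q ^ N)) atTop (𝓝 1) := by
    simpa [smallQExp, qp_zero] using
      tendsto_tsum_mul_mul_pow_pow hQ (summable_norm_smallQExp hQ hz)
  simp only [hiter] at hlim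
  exact tendsto_nhds_unique ((tendsto_qp_qpInf hQ z).mul_const _) hlim

theorem bigQExp_eq_qpInf (hQ : ‖Q‖ < 1) (hz : ‖z‖ < 1) : bigQExp Q z = qpInf z Q := by
  have hiter : ∀ N, bigQExp Q z = qp z Q N * bigQExp Q (z * Q ^ N) := by
    simpa using apply_zero_eq_qp_mul_apply (u := fun N => bigQExp Q (z * Q ^ N)) fun N => by
      rw [pow_succ, ← mul_assoc, ← bigQExp_eq_one_sub_mul hQ (norm_mul_pow_lt_one hQ.le hz N)]
  have hlim : Tendsto (fun N => bigQExp Q (z * Q ^ N)) atTop (𝓝 1) := by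
    simpa [bigQExp, qp_zero] using
      tendsto_tsum_mul_mul_pow_pow hQ (summable_norm_bigQExp hQ hz)
  have h := (tendsto_qp_qpInf hQ z).mul hlim
  simp only [← hiter, mul_one] at h
  exact tendsto_nhds_unique tendsto_const_nhds h

end QExp

theorem tsum_div_qp_mul_one_sub {Q w : ℂ} (hQ : ‖Q‖ < 1) (hw : ‖w‖ < 1) (k : ℕ) :
    ∑' j : ℕ, (-1) ^ j * Q ^ (j * (j + 1) / 2) / (qp Q Q j * (1 - w * Q ^ (k * j)))
      = qpInf Q Q * ∑' m : ℕ, (qp Q Q (k * m))⁻¹ * w ^ m := by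
  -- `b j * x ^ j` is the `j`-th term of `E_Q(x Q)`.
  set b : ℕ → ℂ := fun j => (-1) ^ j * Q ^ j.choose 2 * (qp Q Q j)⁻¹ * Q ^ j
  set f : ℕ → ℕ → ℂ := fun j m => b j * (w * Q ^ (k * j)) ^ m
  have hrow : ∀ j : ℕ,
      (-1) ^ j * Q ^ (j * (j + 1) / 2) / (qp Q Q j * (1 - w * Q ^ (k * j))) = ∑' m, f j m := by
    intro j
    rw [tsum_mul_left, tsum_geometric_of_norm_lt_one (norm_mul_pow_lt_one hQ.le hw _),
      mul_succ_div_two, pow_add, div_eq_mul_inv, mul_inv]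
    simp only [b]
    ring
  have hcol : ∀ m : ℕ, ∑' j, f j m = qpInf Q Q * ((qp Q Q (k * m))⁻¹ * w ^ m) := fun m => by
    have hf : ∀ j,
        f j m = w ^ m * ((-1) ^ j * Q ^ j.choose 2 * (qp Q Q j)⁻¹ * (Q ^ (k * m) * Q) ^ j) :=
      fun j => by simp only [f, b]; ring
    have hsplit := qp_mul_qpInf hQ Q (k * m)
    rw [tsum_congr hf, tsum_mul_left, ← bigQExp, mul_comm (Q ^ (k * m)) Q,
      bigQExp_eq_qpInf hQ (norm_mul_pow_lt_one hQ.le hQ _), ← hsplit]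
    field_simp [qp_ne_zero hQ.le hQ (k * m)]
  have hsum : Summable (Function.uncurry f) := by
    refine .of_norm_bounded ((summable_norm_bigQExp hQ hQ).mul_of_nonneg
      (summable_geometric_of_lt_one (norm_nonneg w) hw) (fun _ => norm_nonneg _)
      (fun _ => by positivity)) fun ⟨j, m⟩ => ?_
    simp only [Function.uncurry_apply_pair, f, norm_mul (b j)]
    gcongr
    rw [norm_pow]
    exact pow_le_pow_left₀ (norm_nonneg _) (norm_mul_pow_le hQ.le w (k * j)) m
  rw [tsum_congr hrow, ← hsum.tsum_comm, tsum_congr hcol, tsum_mul_left]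

section Multisection

variable {h : ℕ} {ω : ℂ}

lemma IsPrimitiveRoot.sum_pow_pow (hω : IsPrimitiveRoot ω h) (n : ℕ) :
    ∑ r ∈ Finset.range h, (ω ^ n) ^ r = if h ∣ n then (h : ℂ) else 0 := by
  split_ifs with hd
  · simp [(hω.pow_eq_one_iff_dvd n).mpr hd]
  · have hne : ω ^ n ≠ 1 := fun hc => hd ((hω.pow_eq_one_iff_dvd n).mp hc)
    rw [geom_sum_eq hne, ← pow_mul, mul_comm, pow_mul, hω.pow_eq_one, one_pow, sub_self,
      zero_div]

lemma tsum_ite_dvd {α : Type*} [AddCommMonoid α] [TopologicalSpace α] (hh : h ≠ 0)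
    (f : ℕ → α) : ∑' n, (if h ∣ n then f n else 0) = ∑' m, f (h * m) := by
  have hsupp : Function.support (fun n => if h ∣ n then f n else 0) ⊆ Set.range (h * ·) :=
    Function.support_subset_iff'.2 fun n hn => if_neg fun ⟨m, hm⟩ => hn ⟨m, hm.symm⟩
  rw [← (mul_right_injective₀ hh).tsum_eq hsupp]
  simp

theorem sum_tsum_mul_mul_root_pow (hω : IsPrimitiveRoot ω h) (hh : h ≠ 0) {c : ℕ → ℂ}
    {B : ℂ} (hc : Summable fun n => ‖c n * B ^ n‖) :
    ∑ r ∈ Finset.range h, ∑' n, c n * (B * ω ^ r) ^ n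
      = h * ∑' m, c (h * m) * B ^ (h * m) := by
  have hω1 : ‖ω‖ = 1 := hω.norm'_eq_one hh
  have hsum : ∀ r, Summable fun n => c n * (B * ω ^ r) ^ n := fun r =>
    .of_norm (hc.congr fun n => by simp [norm_pow, hω1])
  have hterm : ∀ n, ∑ r ∈ Finset.range h, c n * (B * ω ^ r) ^ n
      = h * if h ∣ n then c n * B ^ n else 0 := fun n => by
    simp_rw [mul_pow, ← pow_mul, mul_comm _ n, pow_mul, ← Finset.mul_sum, hω.sum_pow_pow n]
    split_ifs <;> ring
  rw [← Summable.tsum_finsetSum fun r _ => hsum r, tsum_congr hterm, tsum_mul_left,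
    tsum_ite_dvd hh]

end Multisection

theorem entry_1_6_6_root_of_unity_general (h : ℕ) (hh : 1 ≤ h) (q t a ω : ℂ)
    (hqt : ‖q ^ t‖ < 1)
    (hω : IsPrimitiveRoot ω h)
    (haq : ‖a * q‖ < 1) :
    ∑' j : ℕ, (-1 : ℂ) ^ j * (q ^ t) ^ (j * (j + 1) / 2) /
        (qp (q ^ t) (q ^ t) j * (1 - a ^ h * q ^ h * (q ^ t) ^ (h * j)))
    = (1 / (h : ℂ)) *
      ∑ r ∈ Finset.range h, qpInf (q ^ t) (q ^ t) / qpInf (a * q * ω ^ r) (q ^ t) := by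
  have hh0 : h ≠ 0 := Nat.one_le_iff_ne_zero.mp hh
  have hB : ∀ r, ‖a * q * ω ^ r‖ < 1 := fun r => by
    rwa [norm_mul, norm_pow, hω.norm'_eq_one hh0, one_pow, mul_one]
  have hquot : ∀ r, qpInf (q ^ t) (q ^ t) / qpInf (a * q * ω ^ r) (q ^ t)
      = qpInf (q ^ t) (q ^ t) * smallQExp (q ^ t) (a * q * ω ^ r) := fun r => by
    rw [div_eq_mul_inv, ← eq_inv_of_mul_eq_one_right (qpInf_mul_smallQExp hqt (hB r))]
  have haqh : ‖(a * q) ^ h‖ < 1 := by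
    rw [norm_pow]
    exact pow_lt_one₀ (norm_nonneg _) haq hh0
  simp_rw [← mul_pow a q h, tsum_div_qp_mul_one_sub hqt haqh h, hquot, ← Finset.mul_sum,
    smallQExp, sum_tsum_mul_mul_root_pow hω hh0 (summable_norm_smallQExp hqt haq), pow_mul]
  field_simp

/-- root-of-unity summation generalizing Entry 1.6.6. -/
theorem entry_1_6_6_root_of_unity (h : ℕ) (hh : 1 ≤ h) (q t a ω : ℂ)
    (hq : ‖q‖ < 1) (hqt : ‖q ^ t‖ < 1)
    (hω : IsPrimitiveRoot ω h)
    (haq : ‖a * q‖ < 1)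
    (h1 : ∀ j : ℕ, (1 - a ^ h * q ^ h * (q ^ t) ^ (h * j)) ≠ 0)
    (h2 : ∀ r : ℕ, r < h → qpInf (a * q * ω ^ r) (q ^ t) ≠ 0) :
    ∑' j : ℕ, (-1 : ℂ) ^ j * (q ^ t) ^ (j * (j + 1) / 2) /
        (qp (q ^ t) (q ^ t) j * (1 - a ^ h * q ^ h * (q ^ t) ^ (h * j)))
    = (1 / (h : ℂ)) *
      ∑ r ∈ Finset.range h, qpInf (q ^ t) (q ^ t) / qpInf (a * q * ω ^ r) (q ^ t) :=
  entry_1_6_6_root_of_unity_general h hh q t a ω hqt hω haq
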